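/- Let η, ζ be finite measures on ℝ with finite first moments, F ⊂ ℝ a closed set with supp(ζ) ⊂ F and such that the Kellerer dilation ηK^F is well-defined. Then the shadow of η in ηK^F + ζ equals ηK^F, i.e. ηK^F is the ≤_c-minimal measure ξ satisfying η ≤_c ξ ≤_+ ηK^F + ζ. -/

import Mathlib

open MeasureTheory Set Filter Topology

/-- Convex order: `∫ φ dμ ≤ ∫ φ dν` for all convex `φ` for which both integrals exist. -/
def ConvexOrder (μ ν : MeasureTheory.Measure ℝ) : Prop :=
  ∀ φ : ℝ → ℝ, ConvexOn ℝ Set.univ φ → MeasureTheory.Integrable φ μ →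
    MeasureTheory.Integrable φ ν → ∫ x, φ x ∂μ ≤ ∫ x, φ x ∂ν

open Classical in
/-- The Kellerer dilation kernel associated to a closed set `F`. -/
noncomputable def kellererKernel (F : Set ℝ) (x : ℝ) : MeasureTheory.Measure ℝ :=
  if x ∈ F then MeasureTheory.Measure.dirac x
  else
    ENNReal.ofReal ((sInf (F ∩ Set.Ici x) - x) / (sInf (F ∩ Set.Ici x) - sSup (F ∩ Set.Iic x)))
        • MeasureTheory.Measure.dirac (sSup (F ∩ Set.Iic x))
      + ENNReal.ofReal ((x - sSup (F ∩ Set.Iic x)) / (sInf (F ∩ Set.Ici x) - sSup (F ∩ Set.Iic x)))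
        • MeasureTheory.Measure.dirac (sInf (F ∩ Set.Ici x))

/-- `η K^F`, the image of `η` under the Kellerer dilation. -/
noncomputable def dilate (η : MeasureTheory.Measure ℝ) (F : Set ℝ) : MeasureTheory.Measure ℝ :=
  η.bind (kellererKernel F)

/-- `ξ` is the shadow of `η` in `ν`: the `≤_c`-minimal measure between `η` in convex order
and `ν` setwise. -/
def IsShadow (ν η ξ : MeasureTheory.Measure ℝ) : Prop :=
  ConvexOrder η ξ ∧ ξ ≤ ν ∧
    ∀ ξ' : MeasureTheory.Measure ℝ, ConvexOrder η ξ' → ξ' ≤ ν → ConvexOrder ξ ξ'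

open scoped ENNReal


noncomputable def aF (F : Set ℝ) (x : ℝ) : ℝ := sSup (F ∩ Set.Iic x)
noncomputable def bF (F : Set ℝ) (x : ℝ) : ℝ := sInf (F ∩ Set.Ici x)

open Classical in
/-- The chord-interpolation of `φ` over the closed set `F`. -/
noncomputable def psiF (F : Set ℝ) (φ : ℝ → ℝ) (x : ℝ) : ℝ :=
  if x ∉ F ∧ (F ∩ Set.Iic x).Nonempty ∧ (F ∩ Set.Ici x).Nonempty then
    ((bF F x - x) * φ (aF F x) + (x - aF F x) * φ (bF F x)) / (bF F x - aF F x)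
  else φ x

section basic
variable {F : Set ℝ} {x : ℝ}

lemma aF_mem (hFc : IsClosed F) (h : (F ∩ Set.Iic x).Nonempty) : aF F x ∈ F ∧ aF F x ≤ x := by
  have hbdd : BddAbove (F ∩ Set.Iic x) := ⟨x, fun y hy => hy.2⟩
  have hcl : IsClosed (F ∩ Set.Iic x) := hFc.inter isClosed_Iic
  have := hcl.csSup_mem h hbdd
  exact ⟨this.1, this.2⟩

lemma bF_mem (hFc : IsClosed F) (h : (F ∩ Set.Ici x).Nonempty) : bF F x ∈ F ∧ x ≤ bF F x := by
  have hbdd : BddBelow (F ∩ Set.Ici x) := ⟨x, fun y hy => hy.2⟩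
  have hcl : IsClosed (F ∩ Set.Ici x) := hFc.inter isClosed_Ici
  have := hcl.csInf_mem h hbdd
  exact ⟨this.1, this.2⟩

lemma aF_lt (hFc : IsClosed F) (hx : x ∉ F) (h : (F ∩ Set.Iic x).Nonempty) : aF F x < x :=
  lt_of_le_of_ne (aF_mem hFc h).2 (fun he => hx (he ▸ (aF_mem hFc h).1))

lemma bF_gt (hFc : IsClosed F) (hx : x ∉ F) (h : (F ∩ Set.Ici x).Nonempty) : x < bF F x :=
  lt_of_le_of_ne (bF_mem hFc h).2 (fun he => hx (he.symm ▸ (bF_mem hFc h).1))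

lemma psiF_eq_of_mem (φ : ℝ → ℝ) (hx : x ∈ F) : psiF F φ x = φ x := by
  simp [psiF, hx]

/-- points of the open gap determine the same endpoints -/
lemma gap_endpoints (hFc : IsClosed F) (hx : x ∉ F) (hA : (F ∩ Set.Iic x).Nonempty)
    (hB : (F ∩ Set.Ici x).Nonempty) {t : ℝ} (ht : t ∈ Set.Ioo (aF F x) (bF F x)) :
    t ∉ F ∧ (F ∩ Set.Iic t).Nonempty ∧ (F ∩ Set.Ici t).Nonempty ∧
      aF F t = aF F x ∧ bF F t = bF F x := by
  have haf := aF_mem hFc hA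
  have hbf := bF_mem hFc hB
  have hgap : ∀ s ∈ F, s ∉ Set.Ioo (aF F x) (bF F x) := by
    intro s hs hso
    rcases le_total s x with h1 | h1
    · exact absurd (le_csSup (⟨x, fun y hy => hy.2⟩ : BddAbove (F ∩ Set.Iic x)) ⟨hs, h1⟩)
        (not_le.2 hso.1)
    · exact absurd (csInf_le (⟨x, fun y hy => hy.2⟩ : BddBelow (F ∩ Set.Ici x)) ⟨hs, h1⟩)
        (not_le.2 hso.2)
  have htF : t ∉ F := fun h => hgap t h ht
  have hAt : (F ∩ Set.Iic t).Nonempty := ⟨aF F x, haf.1, ht.1.le⟩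
  have hBt : (F ∩ Set.Ici t).Nonempty := ⟨bF F x, hbf.1, ht.2.le⟩
  refine ⟨htF, hAt, hBt, ?_, ?_⟩
  · refine le_antisymm (csSup_le hAt ?_) (le_csSup ⟨t, fun y hy => hy.2⟩ ⟨haf.1, ht.1.le⟩)
    intro s hs
    by_contra hlt
    push_neg at hlt
    exact hgap s hs.1 ⟨hlt, lt_of_le_of_lt hs.2 ht.2⟩
  · refine le_antisymm (csInf_le ⟨t, fun y hy => hy.2⟩ ⟨hbf.1, ht.2.le⟩) (le_csInf hBt ?_)
    intro s hs
    by_contra hlt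
    push_neg at hlt
    exact hgap s hs.1 ⟨lt_of_lt_of_le ht.1 hs.2, hlt⟩

end basic

/-- chord form of convexity -/
lemma chord3 {φ : ℝ → ℝ} (hφ : ConvexOn ℝ Set.univ φ) {u v w : ℝ} (huv : u < v) (hvw : v < w) :
    φ v * (w - u) ≤ φ u * (w - v) + φ w * (v - u) := by
  have h1 : (0:ℝ) < w - u := by linarith
  have hp : (0:ℝ) ≤ (w - v) / (w - u) := div_nonneg (by linarith) (by linarith)
  have hq : (0:ℝ) ≤ (v - u) / (w - u) := div_nonneg (by linarith) (by linarith)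
  have hpq : (w - v) / (w - u) + (v - u) / (w - u) = 1 := by field_simp; ring
  have hcomb : (w - v) / (w - u) * u + (v - u) / (w - u) * w = v := by field_simp; ring
  have := hφ.2 (Set.mem_univ u) (Set.mem_univ w) hp hq hpq
  rw [smul_eq_mul, smul_eq_mul, smul_eq_mul, smul_eq_mul, hcomb] at this
  have h2 : φ v * (w - u) ≤ ((w - v) / (w - u) * φ u + (v - u) / (w - u) * φ w) * (w - u) :=
    mul_le_mul_of_nonneg_right this h1.le
  calc φ v * (w - u) ≤ _ := h2
    _ = φ u * (w - v) + φ w * (v - u) := by field_simp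

section psi
variable {F : Set ℝ} {φ : ℝ → ℝ}

lemma phi_le_psiF (hFc : IsClosed F) (hφ : ConvexOn ℝ Set.univ φ) : ∀ x, φ x ≤ psiF F φ x := by
  intro x
  unfold psiF
  split_ifs with h
  · obtain ⟨hx, hA, hB⟩ := h
    have ha := aF_lt hFc hx hA
    have hb := bF_gt hFc hx hB
    have hc := chord3 hφ ha hb
    rw [le_div_iff₀ (by linarith)]
    linarith
  · exact le_rfl

/-- the chord line of the gap containing `y` lies below `psiF` everywhere -/
lemma line_le_psiF (hFc : IsClosed F) (hφ : ConvexOn ℝ Set.univ φ) {y : ℝ} (hy : y ∉ F) (hA : (F ∩ Set.Iic y).Nonempty)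
    (hB : (F ∩ Set.Ici y).Nonempty) :
    ∀ t, ((bF F y - t) * φ (aF F y) + (t - aF F y) * φ (bF F y)) / (bF F y - aF F y)
      ≤ psiF F φ t := by
  intro t
  set a := aF F y with ha_def
  set b := bF F y with hb_def
  have haf := aF_mem hFc hA
  have hbf := bF_mem hFc hB
  have hab : a < b := lt_trans (aF_lt hFc hy hA) (bF_gt hFc hy hB)
  have hba : (0:ℝ) < b - a := by linarith
  rcases lt_trichotomy t a with hta | hta
  · -- t < a : line ≤ φ t ≤ psiF t
    refine le_trans ?_ (phi_le_psiF hFc hφ t)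
    have hc := chord3 hφ hta hab
    rw [div_le_iff₀ hba]
    linarith
  · rcases hta with heq | hta
    · -- t = a
      rw [heq]
      have : ((b - a) * φ a + (a - a) * φ b) / (b - a) = φ a := by
        field_simp
        ring
      rw [this, psiF_eq_of_mem φ haf.1]
    rcases lt_trichotomy t b with htb | htb
    · -- a < t < b : equality with psiF
      obtain ⟨htF, hAt, hBt, hat, hbt⟩ := gap_endpoints hFc hy hA hB ⟨hta, htb⟩
      unfold psiF
      rw [if_pos ⟨htF, hAt, hBt⟩, hat, hbt]
    · rcases htb with heq | htb
      · rw [heq]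
        have : ((b - b) * φ a + (b - a) * φ b) / (b - a) = φ b := by field_simp; ring
        rw [this, psiF_eq_of_mem φ hbf.1]
      · -- b < t
        refine le_trans ?_ (phi_le_psiF hFc hφ t)
        have hc := chord3 hφ hab htb
        rw [div_le_iff₀ hba]
        linarith

lemma psiF_convex (hFc : IsClosed F) (hφ : ConvexOn ℝ Set.univ φ) : ConvexOn ℝ Set.univ (psiF F φ) := by
  apply convexOn_of_slope_mono_adjacent convex_univ
  intro x y z _ _ hxy hyz
  have hyx : (0:ℝ) < y - x := by linarith
  have hzy : (0:ℝ) < z - y := by linarith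
  rw [div_le_div_iff₀ hyx hzy]
  have key : psiF F φ y * (z - x) ≤ psiF F φ x * (z - y) + psiF F φ z * (y - x) := by
    by_cases h : y ∉ F ∧ (F ∩ Set.Iic y).Nonempty ∧ (F ∩ Set.Ici y).Nonempty
    · obtain ⟨hy, hA, hB⟩ := h
      set a := aF F y
      set b := bF F y
      have hab : a < b := lt_trans (aF_lt hFc hy hA) (bF_gt hFc hy hB)
      have hba : (0:ℝ) < b - a := by linarith
      set L : ℝ → ℝ := fun t => ((b - t) * φ a + (t - a) * φ b) / (b - a) with hL
      have hLy : psiF F φ y = L y := by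
        unfold psiF
        rw [if_pos ⟨hy, hA, hB⟩]
      have haff : L y * (z - x) = L x * (z - y) + L z * (y - x) := by
        simp only [hL]
        field_simp
        ring
      have hLx := line_le_psiF hFc hφ hy hA hB x
      have hLz := line_le_psiF hFc hφ hy hA hB z
      rw [hLy, haff]
      have h1 : L x * (z - y) ≤ psiF F φ x * (z - y) := mul_le_mul_of_nonneg_right hLx hzy.le
      have h2 : L z * (y - x) ≤ psiF F φ z * (y - x) := mul_le_mul_of_nonneg_right hLz hyx.le
      linarith
    · have hpy : psiF F φ y = φ y := by unfold psiF; rw [if_neg h]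
      have hc := chord3 hφ hxy hyz
      have h1 : φ x * (z - y) ≤ psiF F φ x * (z - y) :=
        mul_le_mul_of_nonneg_right (phi_le_psiF hFc hφ x) hzy.le
      have h2 : φ z * (y - x) ≤ psiF F φ z * (y - x) :=
        mul_le_mul_of_nonneg_right (phi_le_psiF hFc hφ z) hyx.le
      rw [hpy]
      linarith
  nlinarith [key]

end psi


lemma measurable_aF {F : Set ℝ} (hFc : IsClosed F) : Measurable (aF F) := by
  rcases F.eq_empty_or_nonempty with rfl | ⟨x0, hx0⟩
  · have : aF ∅ = fun _ => sSup (∅ : Set ℝ) := by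
      funext x; unfold aF; rw [Set.empty_inter]
    rw [this]; exact measurable_const
  by_cases hb : BddBelow F
  · set m := sInf F with hm_def
    have hm : m ∈ F := hFc.csInf_mem ⟨x0, hx0⟩ hb
    have hmin : ∀ y ∈ F, m ≤ y := fun y hy => csInf_le hb hy
    set β : ℝ → ℝ := fun x => sSup (F ∩ Set.Iic (max x m)) with hβ_def
    have hβm : Monotone β := by
      intro x x' hxx'
      exact csSup_le_csSup (⟨max x' m, fun y hy => hy.2⟩ : BddAbove (F ∩ Set.Iic (max x' m)))
        ⟨m, hm, Set.mem_Iic.2 (le_max_right _ _)⟩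
        (Set.inter_subset_inter_right _ (Set.Iic_subset_Iic.2 (max_le_max hxx' le_rfl)))
    have heq : aF F = fun x => if m ≤ x then β x else sSup (∅ : Set ℝ) := by
      funext x
      by_cases hx : m ≤ x
      · rw [if_pos hx]; unfold aF; simp only [hβ_def, max_eq_left hx]
      · rw [if_neg hx]
        unfold aF
        have : F ∩ Set.Iic x = ∅ := by
          ext y; simp only [Set.mem_inter_iff, Set.mem_Iic, Set.mem_empty_iff_false, iff_false]
          rintro ⟨hyF, hyx⟩
          exact hx (le_trans (hmin y hyF) hyx)
        rw [this]
    rw [heq]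
    exact Measurable.ite (show MeasurableSet {a : ℝ | m ≤ a} from measurableSet_Ici) hβm.measurable
      measurable_const
  · have hne : ∀ x, (F ∩ Set.Iic x).Nonempty := by
      intro x
      obtain ⟨y, hyF, hyx⟩ := not_bddBelow_iff.1 hb x
      exact ⟨y, hyF, hyx.le⟩
    have : Monotone (aF F) := by
      intro x x' hxx'
      exact csSup_le_csSup (⟨x', fun y hy => hy.2⟩ : BddAbove (F ∩ Set.Iic x')) (hne x)
        (Set.inter_subset_inter_right _ (Set.Iic_subset_Iic.2 hxx'))
    exact this.measurable

lemma measurable_bF {F : Set ℝ} (hFc : IsClosed F) : Measurable (bF F) := by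
  rcases F.eq_empty_or_nonempty with rfl | ⟨x0, hx0⟩
  · have : bF ∅ = fun _ => sInf (∅ : Set ℝ) := by
      funext x; unfold bF; rw [Set.empty_inter]
    rw [this]; exact measurable_const
  by_cases hb : BddAbove F
  · set M := sSup F with hM_def
    have hM : M ∈ F := hFc.csSup_mem ⟨x0, hx0⟩ hb
    have hmax : ∀ y ∈ F, y ≤ M := fun y hy => le_csSup hb hy
    set β : ℝ → ℝ := fun x => sInf (F ∩ Set.Ici (min x M)) with hβ_def
    have hβm : Monotone β := by
      intro x x' hxx'
      exact csInf_le_csInf (⟨min x M, fun y hy => hy.2⟩ : BddBelow (F ∩ Set.Ici (min x M)))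
        ⟨M, hM, Set.mem_Ici.2 (min_le_right _ _)⟩
        (Set.inter_subset_inter_right _ (Set.Ici_subset_Ici.2 (min_le_min hxx' le_rfl)))
    have heq : bF F = fun x => if x ≤ M then β x else sInf (∅ : Set ℝ) := by
      funext x
      by_cases hx : x ≤ M
      · rw [if_pos hx]; unfold bF; simp only [hβ_def, min_eq_left hx]
      · rw [if_neg hx]
        unfold bF
        have : F ∩ Set.Ici x = ∅ := by
          ext y; simp only [Set.mem_inter_iff, Set.mem_Ici, Set.mem_empty_iff_false, iff_false]
          rintro ⟨hyF, hyx⟩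
          exact hx (le_trans hyx (hmax y hyF))
        rw [this]
    rw [heq]
    exact Measurable.ite (show MeasurableSet {a : ℝ | a ≤ M} from measurableSet_Iic) hβm.measurable
      measurable_const
  · have hne : ∀ x, (F ∩ Set.Ici x).Nonempty := by
      intro x
      obtain ⟨y, hyF, hyx⟩ := not_bddAbove_iff.1 hb x
      exact ⟨y, hyF, hyx.le⟩
    have : Monotone (bF F) := by
      intro x x' hxx'
      exact csInf_le_csInf (⟨x, fun y hy => hy.2⟩ : BddBelow (F ∩ Set.Ici x)) (hne x')
        (Set.inter_subset_inter_right _ (Set.Ici_subset_Ici.2 hxx'))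
    exact this.measurable


lemma measurable_kellererKernel {F : Set ℝ} (hFc : IsClosed F) :
    Measurable (kellererKernel F) := by
  classical
  apply Measure.measurable_of_measurable_coe
  intro s hs
  have heq : (fun x => kellererKernel F x s) = fun x =>
      if x ∈ F then s.indicator (1 : ℝ → ℝ≥0∞) x
      else ENNReal.ofReal ((bF F x - x) / (bF F x - aF F x)) * s.indicator 1 (aF F x)
        + ENNReal.ofReal ((x - aF F x) / (bF F x - aF F x)) * s.indicator 1 (bF F x) := by
    funext x
    unfold kellererKernel
    split_ifs with h
    · exact Measure.dirac_apply x s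
    · rw [Measure.add_apply, Measure.smul_apply, Measure.smul_apply, Measure.dirac_apply,
        Measure.dirac_apply, smul_eq_mul, smul_eq_mul]
      rfl
  rw [heq]
  have hind : Measurable (s.indicator (1 : ℝ → ℝ≥0∞)) := measurable_one.indicator hs
  exact Measurable.ite hFc.measurableSet hind
    ((((((measurable_bF hFc).sub measurable_id).div
        ((measurable_bF hFc).sub (measurable_aF hFc))).ennreal_ofReal).mul
        (hind.comp (measurable_aF hFc))).add
      ((((measurable_id.sub (measurable_aF hFc)).div
        ((measurable_bF hFc).sub (measurable_aF hFc))).ennreal_ofReal).mul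
        (hind.comp (measurable_bF hFc))))


lemma kellererKernel_compl {F : Set ℝ} (hFc : IsClosed F) {x : ℝ}
    (hA : (F ∩ Set.Iic x).Nonempty) (hB : (F ∩ Set.Ici x).Nonempty) :
    kellererKernel F x Fᶜ = 0 := by
  unfold kellererKernel
  split_ifs with h
  · rw [Measure.dirac_apply' x hFc.measurableSet.compl]
    exact Set.indicator_of_notMem (not_not_intro h) _
  · rw [Measure.add_apply, Measure.smul_apply, Measure.smul_apply,
      Measure.dirac_apply' _ hFc.measurableSet.compl,
      Measure.dirac_apply' _ hFc.measurableSet.compl,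
      Set.indicator_of_notMem (not_not_intro (aF_mem hFc hA).1) _,
      Set.indicator_of_notMem (not_not_intro (bF_mem hFc hB).1) _]
    simp


lemma kellererKernel_integral {F : Set ℝ} (hFc : IsClosed F) {φ : ℝ → ℝ} (hφ : Continuous φ)
    {x : ℝ} (hA : (F ∩ Set.Iic x).Nonempty) (hB : (F ∩ Set.Ici x).Nonempty) :
    ∫ y, φ y ∂(kellererKernel F x) = psiF F φ x := by
  unfold kellererKernel
  split_ifs with h
  · rw [integral_dirac, psiF_eq_of_mem φ h]
  · set a := aF F x with ha_def
    set b := bF F x with hb_def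
    have hax : a < x := aF_lt hFc h hA
    have hbx : x < b := bF_gt hFc h hB
    have hba : (0:ℝ) < b - a := by linarith
    have hd1 : Integrable φ (Measure.dirac a) := by
      refine ⟨hφ.aestronglyMeasurable, ?_⟩
      rw [HasFiniteIntegral, lintegral_dirac]
      exact ENNReal.coe_lt_top
    have hd2 : Integrable φ (Measure.dirac b) := by
      refine ⟨hφ.aestronglyMeasurable, ?_⟩
      rw [HasFiniteIntegral, lintegral_dirac]
      exact ENNReal.coe_lt_top
    have h1 : Integrable φ (ENNReal.ofReal ((b - x) / (b - a)) • Measure.dirac a) :=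
      hd1.smul_measure ENNReal.ofReal_ne_top
    have h2 : Integrable φ (ENNReal.ofReal ((x - a) / (b - a)) • Measure.dirac b) :=
      hd2.smul_measure ENNReal.ofReal_ne_top
    rw [show sInf (F ∩ Set.Ici x) = b from rfl, show sSup (F ∩ Set.Iic x) = a from rfl]
    rw [integral_add_measure h1 h2, integral_smul_measure, integral_smul_measure,
      integral_dirac, integral_dirac,
      ENNReal.toReal_ofReal (div_nonneg (by linarith) (by linarith) : (0:ℝ) ≤ (b - x) / (b - a)),
      ENNReal.toReal_ofReal (div_nonneg (by linarith) (by linarith) : (0:ℝ) ≤ (x - a) / (b - a))]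
    unfold psiF
    rw [if_pos ⟨h, hA, hB⟩, ← ha_def, ← hb_def]
    simp only [smul_eq_mul]
    field_simp

lemma integral_bind_real {η : Measure ℝ} {K : ℝ → Measure ℝ} (hK : Measurable K)
    {f : ℝ → ℝ} (hf : Measurable f) (hfi : Integrable f (η.bind K)) :
    Integrable (fun x => ∫ y, f y ∂K x) η ∧
      ∫ y, f y ∂(η.bind K) = ∫ x, ∫ y, f y ∂K x ∂η := by
  set gp : ℝ → ℝ≥0∞ := fun x => ∫⁻ y, ENNReal.ofReal (f y) ∂K x with hgp_def
  set gm : ℝ → ℝ≥0∞ := fun x => ∫⁻ y, ENNReal.ofReal (-f y) ∂K x with hgm_def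
  have hgpm : Measurable gp := (Measure.measurable_lintegral hf.ennreal_ofReal).comp hK
  have hgmm : Measurable gm := (Measure.measurable_lintegral hf.neg.ennreal_ofReal).comp hK
  have hpb : ∫⁻ x, gp x ∂η = ∫⁻ y, ENNReal.ofReal (f y) ∂(η.bind K) :=
    (Measure.lintegral_bind hK.aemeasurable hf.ennreal_ofReal.aemeasurable).symm
  have hmb : ∫⁻ x, gm x ∂η = ∫⁻ y, ENNReal.ofReal (-f y) ∂(η.bind K) :=
    (Measure.lintegral_bind hK.aemeasurable hf.neg.ennreal_ofReal.aemeasurable).symm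
  have hnorm : ∀ y : ℝ, (‖f y‖₊ : ℝ≥0∞) = ENNReal.ofReal (f y) + ENNReal.ofReal (-f y) := by
    intro y
    rw [← enorm_eq_nnnorm, Real.enorm_eq_ofReal_abs]
    rcases le_total 0 (f y) with h | h
    · rw [abs_of_nonneg h,
        show ENNReal.ofReal (-f y) = 0 from ENNReal.ofReal_eq_zero.2 (by linarith), add_zero]
    · rw [abs_of_nonpos h,
        show ENNReal.ofReal (f y) = 0 from ENNReal.ofReal_eq_zero.2 h, zero_add]
  have hfin : ∫⁻ y, (‖f y‖₊ : ℝ≥0∞) ∂(η.bind K) < ∞ := hfi.2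
  have hsum : ∫⁻ y, (‖f y‖₊ : ℝ≥0∞) ∂(η.bind K)
      = (∫⁻ y, ENNReal.ofReal (f y) ∂(η.bind K)) + ∫⁻ y, ENNReal.ofReal (-f y) ∂(η.bind K) := by
    rw [← lintegral_add_left hf.ennreal_ofReal]
    exact lintegral_congr fun y => hnorm y
  have hb1 : ∫⁻ x, gp x ∂η ≠ ∞ := by
    rw [hpb]; intro hcon
    rw [hsum, hcon] at hfin; simp at hfin
  have hb2 : ∫⁻ x, gm x ∂η ≠ ∞ := by
    rw [hmb]; intro hcon
    rw [hsum, hcon] at hfin; simp at hfin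
  have hp_ae : ∀ᵐ x ∂η, gp x < ∞ := ae_lt_top hgpm hb1
  have hm_ae : ∀ᵐ x ∂η, gm x < ∞ := ae_lt_top hgmm hb2
  have hpt : ∀ᵐ x ∂η, ∫ y, f y ∂K x = (gp x).toReal - (gm x).toReal := by
    filter_upwards [hp_ae, hm_ae] with x h1 h2
    have hKi : Integrable f (K x) := by
      refine ⟨hf.aestronglyMeasurable, ?_⟩
      rw [HasFiniteIntegral]
      calc ∫⁻ y, (‖f y‖₊ : ℝ≥0∞) ∂K x
          = ∫⁻ y, (ENNReal.ofReal (f y) + ENNReal.ofReal (-f y)) ∂K x :=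
            lintegral_congr fun y => hnorm y
        _ = gp x + gm x := lintegral_add_left hf.ennreal_ofReal _
        _ < ∞ := ENNReal.add_lt_top.2 ⟨h1, h2⟩
    exact integral_eq_lintegral_pos_part_sub_lintegral_neg_part hKi
  have ip : Integrable (fun x => (gp x).toReal) η :=
    integrable_toReal_of_lintegral_ne_top hgpm.aemeasurable hb1
  have im : Integrable (fun x => (gm x).toReal) η :=
    integrable_toReal_of_lintegral_ne_top hgmm.aemeasurable hb2
  constructor
  · exact (ip.sub im).congr (hpt.mono fun x h => h.symm)
  · rw [integral_eq_lintegral_pos_part_sub_lintegral_neg_part hfi, ← hpb, ← hmb,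
      ← integral_toReal hgpm.aemeasurable hp_ae, ← integral_toReal hgmm.aemeasurable hm_ae,
      ← integral_sub ip im]
    exact (integral_congr_ae hpt).symm

theorem shadow_in_dilate_add
    (η ζ : Measure ℝ) [IsFiniteMeasure η] [IsFiniteMeasure ζ]
    (hη : Integrable (fun y => |y|) η) (hζ : Integrable (fun y => |y|) ζ)
    (F : Set ℝ) (hFc : IsClosed F) (hsupp : ζ Fᶜ = 0)
    (hfin : ∀ᵐ x ∂η, (F ∩ Set.Iic x).Nonempty ∧ (F ∩ Set.Ici x).Nonempty) :
    IsShadow (dilate η F + ζ) η (dilate η F) := by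
  have hK : Measurable (kellererKernel F) := measurable_kellererKernel hFc
  have hdilc : dilate η F Fᶜ = 0 := by
    rw [dilate, Measure.bind_apply hFc.measurableSet.compl hK.aemeasurable]
    have h0 : ∀ᵐ x ∂η, kellererKernel F x Fᶜ = 0 :=
      hfin.mono fun x hx => kellererKernel_compl hFc hx.1 hx.2
    rw [lintegral_congr_ae h0, lintegral_zero]
  refine ⟨?_, ?_, ?_⟩
  · -- η ≤c dilate η F
    intro φ hφ hφη hφdil
    have hφc : Continuous φ := by
      have := hφ.continuousOn isOpen_univ
      rwa [← continuousOn_univ]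
    obtain ⟨hint, heq⟩ := integral_bind_real hK hφc.measurable hφdil
    have hae : (fun x => ∫ y, φ y ∂kellererKernel F x) =ᵐ[η] psiF F φ :=
      hfin.mono fun x hx => kellererKernel_integral hFc hφc hx.1 hx.2
    have hψη : Integrable (psiF F φ) η := hint.congr hae
    calc ∫ x, φ x ∂η ≤ ∫ x, psiF F φ x ∂η :=
          integral_mono hφη hψη (phi_le_psiF hFc hφ)
      _ = ∫ x, ∫ y, φ y ∂kellererKernel F x ∂η := (integral_congr_ae hae).symm
      _ = ∫ x, φ x ∂dilate η F := heq.symm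
  · -- dilate η F ≤ dilate η F + ζ
    exact Measure.le_iff'.2 fun s => by simp
  · -- minimality
    intro ξ' hc hle φ hφ hφdil hφξ'
    have hφc : Continuous φ := by
      have := hφ.continuousOn isOpen_univ
      rwa [← continuousOn_univ]
    obtain ⟨hint, heq⟩ := integral_bind_real hK hφc.measurable hφdil
    have hae : (fun x => ∫ y, φ y ∂kellererKernel F x) =ᵐ[η] psiF F φ :=
      hfin.mono fun x hx => kellererKernel_integral hFc hφc hx.1 hx.2
    have hψη : Integrable (psiF F φ) η := hint.congr hae
    have hξc : ξ' Fᶜ = 0 := by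
      have h1 := Measure.le_iff'.1 hle Fᶜ
      rw [Measure.add_apply, hdilc, hsupp] at h1
      simpa using h1
    have hsub : {x | ¬ psiF F φ x = φ x} ⊆ Fᶜ :=
      fun x hx hxF => hx (psiF_eq_of_mem φ hxF)
    have haeξ : psiF F φ =ᵐ[ξ'] φ := by
      show ∀ᵐ x ∂ξ', psiF F φ x = φ x
      rw [ae_iff]
      exact measure_mono_null hsub hξc
    have hψξ : Integrable (psiF F φ) ξ' := hφξ'.congr haeξ.symm
    calc ∫ x, φ x ∂dilate η F = ∫ x, ∫ y, φ y ∂kellererKernel F x ∂η := heq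
      _ = ∫ x, psiF F φ x ∂η := integral_congr_ae hae
      _ ≤ ∫ x, psiF F φ x ∂ξ' := hc (psiF F φ) (psiF_convex hFc hφ) hψη hψξ
      _ = ∫ x, φ x ∂ξ' := integral_congr_ae haeξ
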